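/- arXiv:1706.03704 — 3 statements merged into one kernel-verified Lean document; each statement's English description precedes it below -/
import Mathlib

section
/- Let $p : (S^1)^n \to (S^1)^{n-1}$ be given by $p(w_1,\ldots,w_n) = (w_1,\ldots,w_{n-2},w_n)$, let $\bar p : K_n \to K_{n-1}$ be the map induced by $p$ on the quotients, and let $q_n : (S^1)^n \to K_n$, $q_{n-1} : (S^1)^{n-1} \to K_{n-1}$ be the quotient maps. Then the commutative square with these four maps is a pullback square of topological spaces; that is, the natural map from $(S^1)^n$ to the fiber product $K_n \times_{K_{n-1}} (S^1)^{n-1}$ (over $\bar p$ and $q_{n-1}$) is a homeomorphism. -/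
noncomputable section

/-- Complex conjugation on the unit circle. -/
def Circle.conj (z : Circle) : Circle :=
  ⟨starRingEnd ℂ z, by
    have := z.2
    simp only [Submonoid.unitSphere, Submonoid.mem_mk, Subsemigroup.mem_mk] at *
    simp_all [mem_sphere_zero_iff_norm]⟩

/-- Negation on the unit circle. -/
def Circle.neg (z : Circle) : Circle :=
  ⟨-(z : ℂ), by
    have := z.2
    simp only [Submonoid.unitSphere, Submonoid.mem_mk, Subsemigroup.mem_mk] at *
    simp_all [mem_sphere_zero_iff_norm]⟩

/-- The torus `(S¹)ⁿ`. -/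
abbrev Torus (n : ℕ) : Type := Fin n → Circle

/-- The involution `(z₁,…,z_{n-1},z_n) ↦ (z̄₁,…,z̄_{n-1},-z_n)` on the torus. -/
def kleinInvolution (n : ℕ) (z : Torus n) : Torus n :=
  fun i => if (i : ℕ) + 1 = n then (z i).neg else (z i).conj

/-- The identification defining the `n`-dimensional Klein bottle. -/
def KleinRel (n : ℕ) (z w : Torus n) : Prop := w = kleinInvolution n z

/-- The `n`-dimensional Klein bottle `Kₙ = (S¹)ⁿ/((z,z_n) ∼ (z̄,-z_n))`. -/
def Klein (n : ℕ) : Type := Quot (KleinRel n)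

instance (n : ℕ) : TopologicalSpace (Klein n) := instTopologicalSpaceQuot

/-- The map `p : (S¹)ⁿ → (S¹)^{n-1}`, `p(w₁,…,wₙ) = (w₁,…,w_{n-2},wₙ)`. -/
def dropPenultimate (n : ℕ) (w : Torus n) : Torus (n - 1) :=
  fun i => if h : (i : ℕ) < n - 2 then w ⟨i, by omega⟩ else w ⟨n - 1, by omega⟩

/-! Identifying each point with its image under a continuous involution `σ` is an open quotient
map, so the quotient of a Hausdorff space is Hausdorff. The natural map `w ↦ (qₙ w, p w)` from
the compact torus into the fiber product is therefore a homeomorphism as soon as it is bijective.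
Since `p ∘ σ = τ ∘ p` and `τ` (the involution defining `K_{n-1}`) has no fixed points, `w` and
`σ w` — the only points with the same image in `Kₙ` — are separated by `p`; and a point of the
fiber product over `q_{n-1} (τ (p w))` is the image of `σ w`. -/

lemma Circle.conj_eq_inv (z : Circle) : z.conj = z⁻¹ :=
  Subtype.ext (Circle.coe_inv_eq_conj z).symm

lemma Circle.neg_eq_neg (z : Circle) : z.neg = -z := rfl

section InvolutionQuotient

variable {X : Type*} {σ : X → X}

theorem quot_mk_eq_mk_iff_of_involutive (hσ : Function.Involutive σ) {x y : X} :
    Quot.mk (fun x y ↦ y = σ x) x = Quot.mk (fun x y ↦ y = σ x) y ↔ y = x ∨ y = σ x := by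
  have hequiv : Equivalence fun x y : X ↦ y = x ∨ y = σ x :=
    { refl := fun _ ↦ .inl rfl
      symm := by rintro x y (rfl | rfl) <;> simp [hσ _]
      trans := by rintro x y z (rfl | rfl) (rfl | rfl) <;> simp [hσ _] }
  refine ⟨fun h ↦ hequiv.eqvGen_iff.mp ?_, ?_⟩
  · exact Relation.EqvGen.mono (fun _ _ ↦ Or.inr) _ _ (Quot.eqvGen_exact h)
  · rintro (rfl | rfl)
    exacts [rfl, Quot.sound rfl]

variable [TopologicalSpace X]

theorem isOpenQuotientMap_quot_mk_of_involutive (hσ : Function.Involutive σ)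
    (hσc : Continuous σ) : IsOpenQuotientMap (Quot.mk fun x y : X ↦ y = σ x) := by
  refine .of_isOpenMap_isQuotientMap (fun U hU ↦ ?_) isQuotientMap_quot_mk
  have hsat : Quot.mk (fun x y ↦ y = σ x) ⁻¹' (Quot.mk (fun x y ↦ y = σ x) '' U) =
      U ∪ σ ⁻¹' U := by
    ext x
    simp only [Set.mem_preimage, Set.mem_image, Set.mem_union,
      quot_mk_eq_mk_iff_of_involutive hσ]
    constructor
    · rintro ⟨y, hy, rfl | rfl⟩
      exacts [.inl hy, .inr (by rwa [hσ])]
    · rintro (hx | hx)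
      exacts [⟨x, hx, .inl rfl⟩, ⟨σ x, hx, .inr (hσ x).symm⟩]
  rw [← isQuotientMap_quot_mk.isOpen_preimage, hsat]
  exact hU.union (hU.preimage hσc)

theorem t2Space_quot_of_involutive [T2Space X] (hσ : Function.Involutive σ)
    (hσc : Continuous σ) : T2Space (Quot fun x y : X ↦ y = σ x) := by
  rw [t2Space_iff_of_isOpenQuotientMap (isOpenQuotientMap_quot_mk_of_involutive hσ hσc)]
  simp only [quot_mk_eq_mk_iff_of_involutive hσ, Set.ofPred_or]
  exact (isClosed_eq continuous_snd continuous_fst).union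
    (isClosed_eq continuous_snd (hσc.comp continuous_fst))

theorem exists_homeomorph_fiberProduct_quot_of_involutive {Y : Type*} [TopologicalSpace Y]
    [CompactSpace X] [T2Space X] [T2Space Y] {τ : Y → Y} {p : X → Y}
    (hσ : Function.Involutive σ) (hσc : Continuous σ) (hτ : Function.Involutive τ)
    (hτfree : ∀ y, τ y ≠ y) (hp : Continuous p) (hpσ : ∀ x, p (σ x) = τ (p x))
    (pbar : Quot (fun x y : X ↦ y = σ x) → Quot (fun x y : Y ↦ y = τ x))
    (hcomm : ∀ x, pbar (Quot.mk _ x) = Quot.mk _ (p x)) :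
    ∃ e : X ≃ₜ {a : Quot (fun x y : X ↦ y = σ x) × Y // pbar a.1 = Quot.mk _ a.2},
      ∀ x, (e x : Quot (fun x y : X ↦ y = σ x) × Y) = (Quot.mk _ x, p x) := by
  have := t2Space_quot_of_involutive hσ hσc
  let f : X → {a : Quot (fun x y : X ↦ y = σ x) × Y // pbar a.1 = Quot.mk _ a.2} :=
    fun x ↦ ⟨(Quot.mk _ x, p x), hcomm x⟩
  have hinj : f.Injective := by
    intro x x' h
    obtain ⟨hq, hpx⟩ := Prod.ext_iff.mp (congrArg Subtype.val h)
    rcases (quot_mk_eq_mk_iff_of_involutive hσ).mp hq with rfl | rfl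
    · rfl
    · exact absurd (hpx.trans (hpσ x)).symm (hτfree _)
  have hsurj : f.Surjective := by
    rintro ⟨⟨a, y⟩, hay⟩
    induction a using Quot.ind with | mk x => ?_
    rw [hcomm, quot_mk_eq_mk_iff_of_involutive hτ] at hay
    rcases hay with rfl | rfl
    · exact ⟨x, rfl⟩
    · refine ⟨σ x, Subtype.ext (Prod.ext ?_ (hpσ x))⟩
      exact (Quot.sound (r := fun x y ↦ y = σ x) rfl).symm
  have hcont : Continuous f := (continuous_quot_mk.prodMk hp).subtype_mk _
  exact ⟨hcont.homeoOfEquivCompactToT2 (f := .ofBijective f ⟨hinj, hsurj⟩), fun _ ↦ rfl⟩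

end InvolutionQuotient

lemma kleinInvolution_involutive (n : ℕ) : Function.Involutive (kleinInvolution n) := by
  intro z
  funext i
  by_cases h : (i : ℕ) + 1 = n <;>
    simp [kleinInvolution, h, Circle.conj_eq_inv, Circle.neg_eq_neg]

lemma continuous_kleinInvolution (n : ℕ) : Continuous (kleinInvolution n) := by
  refine continuous_pi fun i ↦ ?_
  simp only [kleinInvolution, Circle.conj_eq_inv, Circle.neg_eq_neg]
  split_ifs
  exacts [(continuous_apply i).neg, (continuous_apply i).inv]

lemma continuous_dropPenultimate (n : ℕ) : Continuous (dropPenultimate n) :=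
  continuous_pi fun i ↦ by unfold dropPenultimate; split_ifs <;> exact continuous_apply _

lemma dropPenultimate_kleinInvolution (n : ℕ) (w : Torus n) :
    dropPenultimate n (kleinInvolution n w) = kleinInvolution (n - 1) (dropPenultimate n w) := by
  funext i
  have hi : (i : ℕ) < n - 1 := i.2
  simp only [dropPenultimate, kleinInvolution]
  split_ifs <;> first | rfl | omega

lemma kleinInvolution_ne_self {n : ℕ} (hn : 1 ≤ n) (z : Torus n) : kleinInvolution n z ≠ z := by
  intro h
  have hlast := congrFun h ⟨n - 1, by omega⟩
  simp only [kleinInvolution, if_pos (show n - 1 + 1 = n by omega), Circle.neg_eq_neg] at hlast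
  exact Circle.neg_ne_self _ hlast

theorem klein_pullback_general (n : ℕ) (hn : 2 ≤ n)
    (pbar : Klein n → Klein (n - 1))
    (hcomm : ∀ w : Torus n,
      pbar (Quot.mk (KleinRel n) w) = Quot.mk (KleinRel (n - 1)) (dropPenultimate n w)) :
    ∃ e : Torus n ≃ₜ {x : Klein n × Torus (n - 1) //
        pbar x.1 = Quot.mk (KleinRel (n - 1)) x.2},
      ∀ w : Torus n,
        ((e w : Klein n × Torus (n - 1))) =
          (Quot.mk (KleinRel n) w, dropPenultimate n w) :=
  exists_homeomorph_fiberProduct_quot_of_involutive (kleinInvolution_involutive n)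
    (continuous_kleinInvolution n) (kleinInvolution_involutive (n - 1))
    (kleinInvolution_ne_self (by omega)) (continuous_dropPenultimate n)
    (dropPenultimate_kleinInvolution n) pbar hcomm

/-- The square
`(S¹)ⁿ → (S¹)^{n-1}`, `Kₙ → K_{n-1}` (horizontal maps `p`, `p̄`; vertical maps the quotient
maps) is a pullback square: the natural map from `(S¹)ⁿ` to the fiber product
`Kₙ ×_{K_{n-1}} (S¹)^{n-1}` is a homeomorphism. -/
theorem klein_pullback (n : ℕ) (hn : 2 ≤ n)
    (pbar : Klein n → Klein (n - 1)) (hpbar : Continuous pbar)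
    (hcomm : ∀ w : Torus n,
      pbar (Quot.mk (KleinRel n) w) = Quot.mk (KleinRel (n - 1)) (dropPenultimate n w)) :
    ∃ e : Torus n ≃ₜ {x : Klein n × Torus (n - 1) //
        pbar x.1 = Quot.mk (KleinRel (n - 1)) x.2},
      ∀ w : Torus n,
        ((e w : Klein n × Torus (n - 1))) =
          (Quot.mk (KleinRel n) w, dropPenultimate n w) :=
  klein_pullback_general n hn pbar hcomm
end
end

section
/- In $H^*(K_n;\mathbb{Z}_2) \cong \mathbb{Z}_2[R,V_1,\ldots,V_{n-1}]/(R^2, V_i^2+RV_i)$, the Steenrod squares act as follows: for $j > 0$, $\varepsilon \in \{0,1\}$, and distinct indices $i_1,\ldots,i_r$, one has $\mathrm{Sq}^j(R^\varepsilon V_{i_1}\cdots V_{i_r}) = R V_{i_1}\cdots V_{i_r}$ if $j=1$, $\varepsilon = 0$, and $r$ is odd, and $\mathrm{Sq}^j(R^\varepsilon V_{i_1}\cdots V_{i_r}) = 0$ otherwise. -/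
noncomputable section

noncomputable section

/-- An (unreduced, multiplicative) mod-2 singular-type cohomology theory on topological
spaces: a contravariant functor `X ↦ H*(X; ℤ/2)` into graded commutative rings, which is
homotopy invariant, satisfies the dimension axiom, and has Mayer–Vietoris sequences for
open covers (with natural connecting homomorphisms).  Singular cohomology with `ℤ/2`
coefficients is such a theory. -/
structure CohomologyTheoryZ2 : Type 1 where
  /-- The cohomology ring of a space. -/
  H : (X : Type) → [TopologicalSpace X] → Type
  /-- The ring structure (cup product); commutative since the coefficients are `ℤ/2`. -/
  ring : (X : Type) → [TopologicalSpace X] → CommRing (H X)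
  /-- The grading by degree. -/
  grade : (X : Type) → [TopologicalSpace X] → ℕ → AddSubgroup (H X)
  /-- The grading is an internal direct sum decomposition. -/
  internal : ∀ (X : Type) [TopologicalSpace X],
    DirectSum.IsInternal fun n => AddSubgroup.toIntSubmodule (grade X n)
  one_mem : ∀ (X : Type) [TopologicalSpace X], (1 : H X) ∈ grade X 0
  mul_mem : ∀ (X : Type) [TopologicalSpace X] (m k : ℕ) (x y : H X),
    x ∈ grade X m → y ∈ grade X k → x * y ∈ grade X (m + k)
  /-- Contravariant functoriality: pullback along continuous maps. -/
  map : {X Y : Type} → [TopologicalSpace X] → [TopologicalSpace Y] → C(X, Y) → H Y →+* H X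
  map_grade : ∀ {X Y : Type} [TopologicalSpace X] [TopologicalSpace Y] (f : C(X, Y)) (k : ℕ)
    (y : H Y), y ∈ grade Y k → map f y ∈ grade X k
  map_id : ∀ (X : Type) [TopologicalSpace X] (x : H X), map (ContinuousMap.id X) x = x
  map_comp : ∀ {X Y Z : Type} [TopologicalSpace X] [TopologicalSpace Y] [TopologicalSpace Z]
    (f : C(X, Y)) (g : C(Y, Z)) (z : H Z), map f (map g z) = map (g.comp f) z
  /-- Homotopy invariance. -/
  homotopy_invariant : ∀ {X Y : Type} [TopologicalSpace X] [TopologicalSpace Y]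
    (f g : C(X, Y)), f.Homotopic g → map f = map g
  /-- Dimension axiom: the cohomology of a point is `ℤ/2`, in degree `0`. -/
  dim : H PUnit ≃+* ZMod 2
  dim_grade : ∀ k : ℕ, k ≠ 0 → grade PUnit k = ⊥
  /-- Mayer–Vietoris connecting homomorphism of an (arbitrary) pair of subsets. -/
  mv : {X : Type} → [TopologicalSpace X] → (U V : Set X) → H ↥(U ∩ V) →+ H X
  mv_grade : ∀ {X : Type} [TopologicalSpace X] (U V : Set X) (k : ℕ) (w : H ↥(U ∩ V)),
    w ∈ grade ↥(U ∩ V) k → mv U V w ∈ grade X (k + 1)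
  /-- Mayer–Vietoris exactness at `H X`, for an open cover `X = U ∪ V`. -/
  mv_exact_left : ∀ {X : Type} [TopologicalSpace X] (U V : Set X),
    IsOpen U → IsOpen V → U ∪ V = Set.univ → ∀ x : H X,
      (map ⟨Subtype.val, continuous_subtype_val⟩ x = (0 : H ↥U) ∧
        map ⟨Subtype.val, continuous_subtype_val⟩ x = (0 : H ↥V)) ↔ ∃ w, mv U V w = x
  /-- Mayer–Vietoris exactness at `H U ⊕ H V`. -/
  mv_exact_mid : ∀ {X : Type} [TopologicalSpace X] (U V : Set X),
    IsOpen U → IsOpen V → U ∪ V = Set.univ → ∀ (u : H ↥U) (v : H ↥V),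
      (map ⟨Set.inclusion Set.inter_subset_left, continuous_inclusion _⟩ u -
        map ⟨Set.inclusion Set.inter_subset_right, continuous_inclusion _⟩ v = 0) ↔
      ∃ x : H X, map ⟨Subtype.val, continuous_subtype_val⟩ x = u ∧
        map ⟨Subtype.val, continuous_subtype_val⟩ x = v
  /-- Mayer–Vietoris exactness at `H (U ∩ V)`. -/
  mv_exact_right : ∀ {X : Type} [TopologicalSpace X] (U V : Set X),
    IsOpen U → IsOpen V → U ∪ V = Set.univ → ∀ w : H ↥(U ∩ V),
      mv U V w = 0 ↔ ∃ (u : H ↥U) (v : H ↥V),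
        map ⟨Set.inclusion Set.inter_subset_left, continuous_inclusion _⟩ u -
          map ⟨Set.inclusion Set.inter_subset_right, continuous_inclusion _⟩ v = w
  /-- Naturality of the connecting homomorphism. -/
  mv_natural : ∀ {X Y : Type} [TopologicalSpace X] [TopologicalSpace Y] (f : C(X, Y))
    (U V : Set Y) (g : C(↥(f ⁻¹' U ∩ f ⁻¹' V), ↥(U ∩ V))),
    (∀ p, (g p : Y) = f p) →
    ∀ w : H ↥(U ∩ V), mv (f ⁻¹' U) (f ⁻¹' V) (map g w) = map f (mv U V w)

attribute [instance] CohomologyTheoryZ2.ring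

/-- A mod-2 cohomology theory equipped with Steenrod squares. -/
structure SteenrodCohomologyZ2 extends CohomologyTheoryZ2 where
  /-- The Steenrod squaring operations `Sq^j`. -/
  Sq : (j : ℕ) → {X : Type} → [TopologicalSpace X] → H X →+ H X
  sq_zero : ∀ {X : Type} [TopologicalSpace X] (x : H X), Sq 0 x = x
  sq_grade : ∀ {X : Type} [TopologicalSpace X] (j k : ℕ) (x : H X),
    x ∈ grade X k → Sq j x ∈ grade X (k + j)
  sq_square : ∀ {X : Type} [TopologicalSpace X] (k : ℕ) (x : H X),
    x ∈ grade X k → Sq k x = x * x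
  sq_vanish : ∀ {X : Type} [TopologicalSpace X] (j k : ℕ) (x : H X),
    x ∈ grade X k → k < j → Sq j x = 0
  sq_cartan : ∀ {X : Type} [TopologicalSpace X] (j : ℕ) (x y : H X),
    Sq j (x * y) = ∑ p ∈ Finset.range (j + 1), Sq p x * Sq (j - p) y
  sq_natural : ∀ {X Y : Type} [TopologicalSpace X] [TopologicalSpace Y] (f : C(X, Y))
    (j : ℕ) (y : H Y), Sq j (map f y) = map f (Sq j y)

open MvPolynomial

/-- Variables for the presentation of `H*(Kₙ; ℤ/2)`: `none` is `R`, `some i` is `V_{i+1}`. -/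
abbrev KVar (n : ℕ) := Option (Fin n)

/-- The relations `R²` and `Vᵢ² + R Vᵢ`. -/
def kleinRelations (n : ℕ) : Set (MvPolynomial (KVar n) (ZMod 2)) :=
  {X none ^ 2} ∪
    Set.range fun i : Fin n => X (some i) ^ 2 + X none * X (some i)

/-- The ring `ℤ/2[R,V₁,…,Vₙ]/(R², Vᵢ² + R Vᵢ)`. -/
def KleinCohRing (n : ℕ) : Type :=
  MvPolynomial (KVar n) (ZMod 2) ⧸ Ideal.span (kleinRelations n)

instance (n : ℕ) : CommRing (KleinCohRing n) := by unfold KleinCohRing; infer_instance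

/-- The degree-`m` part of the presented ring. -/
def kleinCohGrade (n m : ℕ) : Set (KleinCohRing n) :=
  (Ideal.Quotient.mk (Ideal.span (kleinRelations n))) '' {p | p.IsHomogeneous m}

/-!
Every generator has degree one, so `Sq¹` squares it and all higher squares kill it:
`Sq¹ R = R² = 0` and `Sq¹ Vᵢ = Vᵢ² = R Vᵢ`. The Cartan formula for a degree-one factor `x`
collapses to `Sq^j (x y) = x Sq^j y + x² Sq^{j-1} y`, and an induction over the product of the
`Vᵢ` shows that `Sq¹` multiplies it by `R` once for each factor (so by `R` or by `0`, according
to parity, as `2 = 0`), while the higher squares vanish because every surviving term carries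
`R² = 0`.
-/

namespace SteenrodCohomologyZ2

variable (T : SteenrodCohomologyZ2) {X : Type} [TopologicalSpace X]

theorem sq_mul_of_mem_grade_one {x : T.H X} (hx : x ∈ T.grade X 1) {j : ℕ} (hj : 1 ≤ j)
    (y : T.H X) : T.Sq j (x * y) = x * T.Sq j y + x * x * T.Sq (j - 1) y := by
  have hhigh : ∀ p ∈ Finset.range (j + 1), p ∉ Finset.range 2 → T.Sq p x * T.Sq (j - p) y = 0 :=
    fun p _ hp => by
      rw [T.sq_vanish p 1 x hx (by simp at hp; omega), zero_mul]
  rw [T.sq_cartan, ← Finset.sum_subset (Finset.range_subset_range.mpr (by omega)) hhigh,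
    Finset.sum_range_succ, Finset.sum_range_one, T.sq_zero, Nat.sub_zero,
    T.sq_square 1 x hx]

section Products

variable {ι : Type*} {r : T.H X} {v : ι → T.H X}

theorem sq_one_prod (h2 : (2 : T.H X) = 0) (hv : ∀ i, v i ∈ T.grade X 1)
    (hvv : ∀ i, v i * v i = r * v i) (s : Finset ι) :
    T.Sq 1 (∏ i ∈ s, v i) = if Odd s.card then r * ∏ i ∈ s, v i else 0 := by
  classical
  induction s using Finset.induction_on with
  | empty => simp [T.sq_vanish 1 0 1 (T.one_mem X) one_pos]
  | @insert a s ha ih =>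
    rw [Finset.prod_insert ha, T.sq_mul_of_mem_grade_one (hv a) le_rfl, ih, hvv,
      Nat.sub_self, T.sq_zero, Finset.card_insert_of_notMem ha]
    by_cases hodd : Odd s.card
    · have hcancel : r * v a * ∏ i ∈ s, v i + r * v a * ∏ i ∈ s, v i = 0 := by
        rw [← two_mul, h2, zero_mul]
      simpa [hodd, Nat.odd_add_one, mul_left_comm (v a) r, mul_assoc] using hcancel
    · simp [hodd, Nat.odd_add_one, mul_assoc]

theorem sq_prod_eq_zero (h2 : (2 : T.H X) = 0) (hr : r * r = 0) (hv : ∀ i, v i ∈ T.grade X 1)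
    (hvv : ∀ i, v i * v i = r * v i) (s : Finset ι) {j : ℕ} (hj : 2 ≤ j) :
    T.Sq j (∏ i ∈ s, v i) = 0 := by
  classical
  induction s using Finset.induction_on generalizing j with
  | empty => simpa using T.sq_vanish j 0 1 (T.one_mem X) (by omega)
  | @insert a s ha ih =>
    rw [Finset.prod_insert ha, T.sq_mul_of_mem_grade_one (hv a) (by omega), ih hj, mul_zero,
      zero_add, hvv]
    obtain hj2 | hj3 := Nat.lt_or_ge j 3
    · rw [show j - 1 = 1 by omega, T.sq_one_prod h2 hv hvv]
      split_ifs
      · rw [show r * v a * (r * ∏ i ∈ s, v i) = r * r * (v a * ∏ i ∈ s, v i) by ring, hr,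
          zero_mul]
      · rw [mul_zero]
    · rw [ih (by omega), mul_zero]

theorem sq_pow_mul_prod (h2 : (2 : T.H X) = 0) (hr : r * r = 0) (hrgr : r ∈ T.grade X 1)
    (hv : ∀ i, v i ∈ T.grade X 1) (hvv : ∀ i, v i * v i = r * v i) (s : Finset ι)
    {j : ℕ} (hj : 0 < j) {ε : ℕ} (hε : ε ≤ 1) :
    T.Sq j (r ^ ε * ∏ i ∈ s, v i) =
      if j = 1 ∧ ε = 0 ∧ Odd s.card then r * ∏ i ∈ s, v i else 0 := by
  have hprod : T.Sq j (∏ i ∈ s, v i) =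
      if j = 1 ∧ Odd s.card then r * ∏ i ∈ s, v i else 0 := by
    obtain rfl | hj2 := eq_or_lt_of_le (Nat.succ_le_of_lt hj)
    · simp [T.sq_one_prod h2 hv hvv]
    · simp [T.sq_prod_eq_zero h2 hr hv hvv s hj2, hj2.ne']
  obtain rfl | rfl : ε = 0 ∨ ε = 1 := by omega
  · simpa using hprod
  · rw [pow_one, T.sq_mul_of_mem_grade_one hrgr hj, hr, zero_mul, add_zero, hprod,
      if_neg (show ¬(j = 1 ∧ 1 = 0 ∧ Odd s.card) by simp)]
    split_ifs
    · rw [← mul_assoc, hr, zero_mul]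
    · rw [mul_zero]

end Products

end SteenrodCohomologyZ2

theorem CohomologyTheoryZ2.mem_grade_of_ringEquiv_kleinCohRing (T : CohomologyTheoryZ2)
    {X : Type} [TopologicalSpace X] {n : ℕ} (e : T.H X ≃+* KleinCohRing n) {m : ℕ}
    (hgr : e '' (T.grade X m : Set (T.H X)) = kleinCohGrade n m)
    {p : MvPolynomial (KVar n) (ZMod 2)} (hp : p.IsHomogeneous m) {x : T.H X}
    (hx : e x = Ideal.Quotient.mk (Ideal.span (kleinRelations n)) p) : x ∈ T.grade X m := by
  have hxm : e x ∈ kleinCohGrade n m := ⟨p, hp, hx.symm⟩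
  rw [← hgr] at hxm
  obtain ⟨y, hy, hey⟩ := hxm
  rwa [← e.injective hey]

section KleinCohRing

variable {n : ℕ} {A : Type*} [Ring A] (e : A ≃+* KleinCohRing n)
include e

local notation "π" => Ideal.Quotient.mk (Ideal.span (kleinRelations n))

/- The ring operations of the type synonym `KleinCohRing n` do not unify syntactically with those
of the quotient, so each identity is first restated in the quotient ring. -/

theorem two_eq_zero_of_ringEquiv_kleinCohRing : (2 : A) = 0 := by
  have h := congrArg π (CharTwo.two_eq_zero : (2 : MvPolynomial (KVar n) (ZMod 2)) = 0)
  rw [map_ofNat, map_zero] at h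
  exact e.injective (by rw [map_ofNat, map_zero]; exact h)

theorem mul_self_eq_zero_of_ringEquiv_kleinCohRing {R : A} (heR : e R = π (X none)) :
    R * R = 0 := by
  refine e.injective ?_
  rw [map_mul, heR, map_zero]
  refine (show π (X none) * π (X none) = 0 from ?_)
  rw [← map_mul, Ideal.Quotient.eq_zero_iff_mem, ← sq]
  exact Ideal.subset_span (Set.mem_union_left _ rfl)

theorem mul_self_eq_of_ringEquiv_kleinCohRing {R V : A} {i : Fin n} (heR : e R = π (X none))
    (heV : e V = π (X (some i))) : V * V = R * V := by
  refine e.injective ?_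
  rw [map_mul, map_mul, heR, heV]
  refine (show π (X (some i)) * π (X (some i)) = π (X none) * π (X (some i)) from ?_)
  rw [← map_mul, ← map_mul, Ideal.Quotient.eq, CharTwo.sub_eq_add, ← sq]
  exact Ideal.subset_span (Set.mem_union_right _ ⟨i, rfl⟩)

end KleinCohRing

/-- In `H*(Kₙ;ℤ₂) = ℤ₂[R,V₁,…,V_{n-1}]/(R²,Vᵢ²+RVᵢ)`, for `j > 0`:
`Sq^j(Rᵉ V_{i₁} ⋯ V_{i_r}) = R V_{i₁} ⋯ V_{i_r}` if `j = 1`, `e = 0` and `r` is odd, and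
`= 0` otherwise.  (Here `R`, `V i` are the standard generators of the cohomology of
`K_{n+1}`, pinned down by a graded isomorphism with the presented ring.) -/
theorem klein_steenrod_action (n : ℕ) (T : SteenrodCohomologyZ2)
    (R : T.H (Klein (n + 1))) (V : Fin n → T.H (Klein (n + 1)))
    (e : T.H (Klein (n + 1)) ≃+* KleinCohRing n)
    (hgr : ∀ m : ℕ, e '' (T.grade (Klein (n + 1)) m : Set (T.H (Klein (n + 1)))) =
      kleinCohGrade n m)
    (heR : e R = Ideal.Quotient.mk (Ideal.span (kleinRelations n)) (X none))
    (heV : ∀ i : Fin n, e (V i) =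
      Ideal.Quotient.mk (Ideal.span (kleinRelations n)) (X (some i))) :
    ∀ (j : ℕ), 0 < j → ∀ (ε : ℕ), ε ≤ 1 → ∀ (s : Finset (Fin n)),
      T.Sq j (R ^ ε * ∏ i ∈ s, V i) =
        if j = 1 ∧ ε = 0 ∧ Odd s.card then R * ∏ i ∈ s, V i else 0 := by
  have hR : R ∈ T.grade (Klein (n + 1)) 1 :=
    T.mem_grade_of_ringEquiv_kleinCohRing e (hgr 1) (isHomogeneous_X _ _) heR
  have hV : ∀ i, V i ∈ T.grade (Klein (n + 1)) 1 := fun i =>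
    T.mem_grade_of_ringEquiv_kleinCohRing e (hgr 1) (isHomogeneous_X _ _) (heV i)
  intro j hj ε hε s
  exact T.sq_pow_mul_prod (two_eq_zero_of_ringEquiv_kleinCohRing e)
    (mul_self_eq_zero_of_ringEquiv_kleinCohRing e heR) hR hV
    (fun i => mul_self_eq_of_ringEquiv_kleinCohRing e heR (heV i)) s hj hε
end
end
end

section
/- Let $r_1,\ldots,r_{n-1}$ be positive reals with $r_i > \sum_{j>i} r_j$ for each $i$. Define, for $\bar\theta = (\theta_1,\ldots,\theta_{n-1}) \in (\mathbb{R}/2\pi\mathbb{Z})^{n-1}$: $w_n = r_{n-1}$; $w_i = r_{i-1} + w_{i+1}\cos(\theta_i)$ for $1 < i \le n-1$; $x_i = w_i \sin(\theta_{i-1})$ for $1 < i \le n$; and $x_1 = w_2\cos(\theta_1)$. Then $\bar\theta \mapsto (x_1(\bar\theta),\ldots,x_n(\bar\theta))$ is a (topological) embedding of the torus $T^{n-1}$ into $\mathbb{R}^n$ satisfying $x_1(-\bar\theta) = x_1(\bar\theta)$ and $x_i(-\bar\theta) = -x_i(\bar\theta)$ for $2 \le i \le n$, and its maximal first coordinate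 is $r_1 + \cdots + r_{n-1}$. -/
noncomputable section

/-- `nestedW n r θ k` is the quantity `w_{n-k}` of Lemma `emb`:
`w_n = r_{n-1}` and `w_i = r_{i-1} + w_{i+1} cos θ_i` for `1 < i ≤ n-1`. -/
def nestedW (n : ℕ) (r : ℕ → ℝ) (θ : ℕ → Real.Angle) : ℕ → ℝ
  | 0 => r (n - 1)
  | k + 1 => r (n - k - 2) + nestedW n r θ k * (θ (n - k - 1)).cos

/-- `w_i` itself. -/
def wOf (n : ℕ) (r : ℕ → ℝ) (θ : ℕ → Real.Angle) (i : ℕ) : ℝ := nestedW n r θ (n - i)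

/-- The coordinates `x_i`, `1 ≤ i ≤ n`: `x_1 = w_2 cos θ₁` and `x_i = w_i sin θ_{i-1}`. -/
def xCoord (n : ℕ) (r : ℕ → ℝ) (θ : ℕ → Real.Angle) (i : ℕ) : ℝ :=
  if i = 1 then wOf n r θ 2 * (θ 1).cos else wOf n r θ i * (θ (i - 1)).sin

/-- The parametrization of the embedded torus `T^{n-1} ⊆ ℝⁿ` (the `i`-th coordinate,
`0`-indexed, is `x_{i+1}` in terms of the angles `θ₁,…,θ_{n-1}`, `1`-indexed). -/
def torusEmbedding (n : ℕ) (r : ℕ → ℝ) (θv : Fin (n - 1) → Real.Angle) : Fin n → ℝ :=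
  fun i =>
    xCoord n r (fun k => if h : k - 1 < n - 1 ∧ 1 ≤ k then θv ⟨k - 1, h.1⟩ else 0) ((i : ℕ) + 1)


/-!
Every nested radius `w_i` (`2 ≤ i ≤ n`) satisfies `0 < w_i ≤ r_{i-1} + ⋯ + r_{n-1}`, by descending
induction: `|w_{i+1} cos θ_i| ≤ w_{i+1} ≤ r_i + ⋯ + r_{n-1} < r_{i-1}`. Hence the angles can be
read off a point one at a time: `(x₁, x₂) = w₂ (cos θ₁, sin θ₁)` are polar coordinates with
positive radius, so they determine `w₂` and `θ₁`; and once `w_i` is known,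
`(w_i - r_{i-1}, x_{i+1}) = w_{i+1} (cos θ_i, sin θ_i)` determines `w_{i+1}` and `θ_i`. So the map
is injective, and being continuous on the compact torus it is an embedding. The `w_i` are even in
`θ̄`, which gives the symmetries, and `x₁ ≤ w₂ ≤ r₁ + ⋯ + r_{n-1}` with equality at `θ̄ = 0`.
-/

open Finset Topology

namespace Real.Angle

instance : CompactSpace Angle :=
  haveI : Fact (0 < 2 * π) := ⟨two_pi_pos⟩
  AddCircle.compactSpace _

lemma abs_cos_le_one (θ : Angle) : |θ.cos| ≤ 1 := by
  rw [← cos_toReal]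
  exact Real.abs_cos_le_one _

lemma eq_of_cos_eq_of_sin_eq {θ ψ : Angle} (hc : θ.cos = ψ.cos) (hs : θ.sin = ψ.sin) :
    θ = ψ := by
  rw [← coe_toReal θ, ← coe_toReal ψ]
  exact cos_sin_inj (by rwa [cos_toReal, cos_toReal]) (by rwa [sin_toReal, sin_toReal])

lemma eq_and_eq_of_mul_cos_eq_of_mul_sin_eq {a b : ℝ} {θ ψ : Angle} (ha : 0 < a) (hb : 0 < b)
    (hc : a * θ.cos = b * ψ.cos) (hs : a * θ.sin = b * ψ.sin) : a = b ∧ θ = ψ := by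
  have hsq : a ^ 2 = b ^ 2 :=
    calc a ^ 2 = (a * θ.cos) ^ 2 + (a * θ.sin) ^ 2 := by
          linear_combination (-a ^ 2) * cos_sq_add_sin_sq θ
      _ = (b * ψ.cos) ^ 2 + (b * ψ.sin) ^ 2 := by rw [hc, hs]
      _ = b ^ 2 := by linear_combination b ^ 2 * cos_sq_add_sin_sq ψ
  obtain rfl : a = b := (pow_left_inj₀ ha.le hb.le two_ne_zero).1 hsq
  exact ⟨rfl, eq_of_cos_eq_of_sin_eq (mul_left_cancel₀ ha.ne' hc) (mul_left_cancel₀ ha.ne' hs)⟩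

end Real.Angle

def DominantRadii (n : ℕ) (r : ℕ → ℝ) : Prop :=
  ∀ i, 1 ≤ i → i ≤ n - 1 → ∑ j ∈ Ioc i (n - 1), r j < r i

section NestedRadii

variable {n : ℕ} {r : ℕ → ℝ}

lemma wOf_self (θ : ℕ → Real.Angle) : wOf n r θ n = r (n - 1) := by
  rw [wOf, Nat.sub_self, nestedW]

lemma wOf_of_lt (θ : ℕ → Real.Angle) {i : ℕ} (hi : i < n) :
    wOf n r θ i = r (i - 1) + wOf n r θ (i + 1) * (θ i).cos := by
  rw [wOf, show n - i = n - (i + 1) + 1 by omega, nestedW, wOf,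
    show n - (n - (i + 1)) - 2 = i - 1 by omega, show n - (n - (i + 1)) - 1 = i by omega]

lemma wOf_neg (θ : ℕ → Real.Angle) (i : ℕ) : wOf n r (-θ) i = wOf n r θ i := by
  suffices ∀ k, nestedW n r (-θ) k = nestedW n r θ k from this _
  intro k
  induction k with
  | zero => rfl
  | succ k ih => rw [nestedW, nestedW, ih, Pi.neg_apply, Real.Angle.cos_neg]

lemma continuous_wOf (i : ℕ) : Continuous fun θ : ℕ → Real.Angle => wOf n r θ i := by
  suffices ∀ k, Continuous fun θ : ℕ → Real.Angle => nestedW n r θ k from this _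
  intro k
  induction k with
  | zero => exact continuous_const
  | succ k ih =>
    exact continuous_const.add (ih.mul (Real.Angle.continuous_cos.comp (continuous_apply _)))

lemma wOf_pos_and_le_sum (hdom : DominantRadii n r)
    (θ : ℕ → Real.Angle) {i : ℕ} (hi : i ≤ n - 1) (hi1 : 1 ≤ i) :
    0 < wOf n r θ (i + 1) ∧ wOf n r θ (i + 1) ≤ ∑ j ∈ Icc i (n - 1), r j := by
  induction hi using Nat.decreasingInduction with
  | self =>
    rw [Nat.sub_add_cancel (by omega), wOf_self]
    simpa using hdom (n - 1) hi1 le_rfl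
  | of_succ i hi ih =>
    obtain ⟨hw, hle⟩ := ih (by omega)
    have hcos : |wOf n r θ (i + 1 + 1) * (θ (i + 1)).cos| ≤ wOf n r θ (i + 1 + 1) := by
      rw [abs_mul, abs_of_pos hw]
      exact mul_le_of_le_one_right hw.le (Real.Angle.abs_cos_le_one _)
    rw [Icc_add_one_left_eq_Ioc] at hle
    have hlt := hdom i hi1 hi.le
    rw [wOf_of_lt θ (by omega), Nat.add_sub_cancel, ← add_sum_Ioc_eq_sum_Icc hi.le]
    constructor <;> linarith [abs_le.1 hcos]

lemma wOf_zero {i : ℕ} (hi1 : 1 ≤ i) (hi : i ≤ n - 1) :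
    wOf n r 0 (i + 1) = ∑ j ∈ Icc i (n - 1), r j := by
  induction hi using Nat.decreasingInduction with
  | self =>
    rw [Nat.sub_add_cancel (by omega), wOf_self]
    simp
  | of_succ i hi ih =>
    rw [wOf_of_lt 0 (by omega), ih (by omega), Pi.zero_apply, Real.Angle.cos_zero, mul_one,
      Icc_add_one_left_eq_Ioc, Nat.add_sub_cancel, add_sum_Ioc_eq_sum_Icc hi.le]

lemma xCoord_one (θ : ℕ → Real.Angle) : xCoord n r θ 1 = wOf n r θ 2 * (θ 1).cos := if_pos rfl

lemma xCoord_succ (θ : ℕ → Real.Angle) {i : ℕ} (hi : i ≠ 0) :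
    xCoord n r θ (i + 1) = wOf n r θ (i + 1) * (θ i).sin := by
  rw [xCoord, if_neg (by omega), Nat.add_sub_cancel]

lemma continuous_xCoord (i : ℕ) : Continuous fun θ : ℕ → Real.Angle => xCoord n r θ i := by
  unfold xCoord
  split_ifs
  exacts [(continuous_wOf 2).mul (Real.Angle.continuous_cos.comp (continuous_apply 1)),
    (continuous_wOf i).mul (Real.Angle.continuous_sin.comp (continuous_apply _))]

lemma xCoord_neg_one (θ : ℕ → Real.Angle) : xCoord n r (-θ) 1 = xCoord n r θ 1 := by
  rw [xCoord_one, xCoord_one, wOf_neg, Pi.neg_apply, Real.Angle.cos_neg]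

lemma xCoord_neg_succ (θ : ℕ → Real.Angle) {i : ℕ} (hi : i ≠ 0) :
    xCoord n r (-θ) (i + 1) = -xCoord n r θ (i + 1) := by
  rw [xCoord_succ _ hi, xCoord_succ _ hi, wOf_neg, Pi.neg_apply, Real.Angle.sin_neg, mul_neg]

lemma xCoord_one_le_sum (hdom : DominantRadii n r) (hn : 2 ≤ n) (θ : ℕ → Real.Angle) :
    xCoord n r θ 1 ≤ ∑ j ∈ Icc 1 (n - 1), r j := by
  obtain ⟨hw, hle⟩ := wOf_pos_and_le_sum hdom θ (i := 1) (by omega) le_rfl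
  rw [xCoord_one]
  calc wOf n r θ 2 * (θ 1).cos ≤ wOf n r θ 2 :=
        mul_le_of_le_one_right hw.le ((le_abs_self _).trans (Real.Angle.abs_cos_le_one _))
    _ ≤ ∑ j ∈ Icc 1 (n - 1), r j := hle

lemma xCoord_zero_one (hn : 2 ≤ n) : xCoord n r 0 1 = ∑ j ∈ Icc 1 (n - 1), r j := by
  rw [xCoord_one, wOf_zero le_rfl (by omega), Pi.zero_apply, Real.Angle.cos_zero, mul_one]

lemma wOf_succ_eq_and_eq_of_xCoord_eq (hdom : DominantRadii n r) {θ ψ : ℕ → Real.Angle}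
    (h : ∀ i, 1 ≤ i → i ≤ n → xCoord n r θ i = xCoord n r ψ i)
    {i : ℕ} (hi1 : 1 ≤ i) (hi : i ≤ n - 1) :
    wOf n r θ (i + 1) = wOf n r ψ (i + 1) ∧ θ i = ψ i := by
  have polar : ∀ i, 1 ≤ i → i ≤ n - 1 →
      wOf n r θ (i + 1) * (θ i).cos = wOf n r ψ (i + 1) * (ψ i).cos →
      wOf n r θ (i + 1) = wOf n r ψ (i + 1) ∧ θ i = ψ i := fun i hi1 hi hcos =>
    Real.Angle.eq_and_eq_of_mul_cos_eq_of_mul_sin_eq (wOf_pos_and_le_sum hdom θ hi hi1).1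
      (wOf_pos_and_le_sum hdom ψ hi hi1).1 hcos
      (by simpa only [xCoord_succ _ (by omega : i ≠ 0)] using h (i + 1) (by omega) (by omega))
  induction i, hi1 using Nat.le_induction with
  | base => exact polar 1 le_rfl hi (by simpa only [xCoord_one] using h 1 le_rfl (by omega))
  | succ i hi1 ih =>
    obtain ⟨hw, -⟩ := ih (by omega)
    refine polar (i + 1) (by omega) hi ?_
    have hθ := wOf_of_lt (r := r) θ (by omega : i + 1 < n)
    have hψ := wOf_of_lt (r := r) ψ (by omega : i + 1 < n)
    linarith

end NestedRadii

def angleSeq (n : ℕ) (θ : Fin (n - 1) → Real.Angle) : ℕ → Real.Angle :=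
  fun k => if h : k - 1 < n - 1 ∧ 1 ≤ k then θ ⟨k - 1, h.1⟩ else 0

section AngleSeq

variable {n : ℕ}

lemma torusEmbedding_apply (r : ℕ → ℝ) (θ : Fin (n - 1) → Real.Angle) (i : Fin n) :
    torusEmbedding n r θ i = xCoord n r (angleSeq n θ) (i + 1) := rfl

lemma angleSeq_succ (θ : Fin (n - 1) → Real.Angle) (j : Fin (n - 1)) :
    angleSeq n θ (j + 1) = θ j := by
  simp [angleSeq]

lemma angleSeq_neg (θ : Fin (n - 1) → Real.Angle) :
    angleSeq n (fun j => -θ j) = -angleSeq n θ := by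
  funext k
  simp only [angleSeq, Pi.neg_apply]
  split_ifs <;> simp

lemma angleSeq_zero : angleSeq n 0 = 0 := by
  funext k
  simp [angleSeq]

lemma continuous_angleSeq : Continuous (angleSeq n) := by
  refine continuous_pi fun k => ?_
  simp only [angleSeq]
  split_ifs
  exacts [continuous_apply _, continuous_const]

end AngleSeq

section TorusEmbedding

variable {n : ℕ} {r : ℕ → ℝ}

lemma continuous_torusEmbedding : Continuous (torusEmbedding n r) :=
  continuous_pi fun _ => (continuous_xCoord _).comp continuous_angleSeq

lemma injective_torusEmbedding (hdom : DominantRadii n r) :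
    Function.Injective (torusEmbedding n r) := by
  intro θ ψ h
  funext j
  rw [← angleSeq_succ θ j, ← angleSeq_succ ψ j]
  refine (wOf_succ_eq_and_eq_of_xCoord_eq hdom (fun _ hi1 hi => ?_) (by omega) (by omega)).2
  obtain ⟨m, rfl⟩ := Nat.exists_eq_add_of_le' hi1
  exact congrFun h ⟨m, by omega⟩

lemma isEmbedding_torusEmbedding (hdom : DominantRadii n r) : IsEmbedding (torusEmbedding n r) :=
  (continuous_torusEmbedding.isClosedEmbedding (injective_torusEmbedding hdom)).isEmbedding

end TorusEmbedding

/-- For radii `r₁ > r₂ + ⋯ + r_{n-1}`, `r₂ > r₃ + ⋯`, …, the map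
`θ̄ ↦ (x₁(θ̄),…,xₙ(θ̄))` is an embedding of `T^{n-1}` into `ℝⁿ`, it is even in the first
coordinate and odd in the others, and its maximal first coordinate is `r₁ + ⋯ + r_{n-1}`. -/
theorem torusEmbedding_spec (n : ℕ) (hn : 2 ≤ n) (r : ℕ → ℝ)
    (hdom : ∀ i, 1 ≤ i → i ≤ n - 1 → (∑ j ∈ Finset.Ioc i (n - 1), r j) < r i) :
    Topology.IsEmbedding (torusEmbedding n r) ∧
    (∀ θv : Fin (n - 1) → Real.Angle,
      torusEmbedding n r (fun i => -θv i) ⟨0, by omega⟩ =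
        torusEmbedding n r θv ⟨0, by omega⟩) ∧
    (∀ θv : Fin (n - 1) → Real.Angle, ∀ i : Fin n, 1 ≤ (i : ℕ) →
      torusEmbedding n r (fun i => -θv i) i = -torusEmbedding n r θv i) ∧
    (∀ θv : Fin (n - 1) → Real.Angle,
      torusEmbedding n r θv ⟨0, by omega⟩ ≤ ∑ i ∈ Finset.Icc 1 (n - 1), r i) ∧
    (∃ θv : Fin (n - 1) → Real.Angle,
      torusEmbedding n r θv ⟨0, by omega⟩ = ∑ i ∈ Finset.Icc 1 (n - 1), r i) := by
  refine ⟨isEmbedding_torusEmbedding hdom, fun θ => ?_, fun θ i hi => ?_,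
    fun θ => xCoord_one_le_sum hdom hn _, ⟨0, ?_⟩⟩
  · rw [torusEmbedding_apply, torusEmbedding_apply, angleSeq_neg]
    exact xCoord_neg_one _
  · rw [torusEmbedding_apply, torusEmbedding_apply, angleSeq_neg]
    exact xCoord_neg_succ _ (by omega)
  · rw [torusEmbedding_apply, angleSeq_zero]
    exact xCoord_zero_one hn
end
end
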